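/- arXiv:1805.10250 — 2 statements merged into one kernel-verified Lean document; each statement's English description precedes it below -/
import Mathlib

section
/- If a pinpointing state B^pin is reachable from a pinpointing state A^pin by a finite sequence of pinpointing rule applications (A^pin ⇀* B^pin), then for every valuation V, the projection B_V is reachable from the projection A_V by a finite (possibly empty) sequence of classical rule applications (A_V →* B_V). -/
/-- Monotone Boolean formulas over propositional variables of type `V`. -/
inductive MBF (V : Type) : Type
  | var : V → MBF V
  | top : MBF V
  | bot : MBF V
  | and : MBF V → MBF V → MBF V
  | or  : MBF V → MBF V → MBF V

/-- Satisfaction of a monotone Boolean formula by a valuation (a set of variables). -/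
def MBF.sat {V : Type} (v : Set V) : MBF V → Prop
  | .var p => p ∈ v
  | .top => True
  | .bot => False
  | .and φ ψ => φ.sat v ∧ ψ.sat v
  | .or φ ψ => φ.sat v ∨ ψ.sat v

/-- `φ` entails `ψ`: every valuation satisfying `φ` satisfies `ψ`. -/
def MBF.entails {V : Type} (φ ψ : MBF V) : Prop :=
  ∀ v : Set V, φ.sat v → ψ.sat v

/-- A rule: a pair of finite sets of consequences (premises and results). -/
structure Rule (C : Type) where
  pre : Finset C
  res : Finset C

/-- A rule `R` is applicable to a state `A` if `pre R ⊆ A` and `res R ⊄ A`. -/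
def applicable {C : Type} (R : Rule C) (A : Set C) : Prop :=
  ↑R.pre ⊆ A ∧ ¬ (↑R.res ⊆ A)

/-- Classical rule application: `A →_R B`. -/
def step {C : Type} (R : Rule C) (A B : Set C) : Prop :=
  applicable R A ∧ B = A ∪ ↑R.res

/-- One step with some rule from the fixed set of rules `Rs`. -/
def stepAny {C : Type} (Rs : Set (Rule C)) (A B : Set C) : Prop :=
  ∃ R ∈ Rs, step R A B

/-- Reflexive-transitive closure of classical rule application: `A →* B`. -/
def steps {C : Type} (Rs : Set (Rule C)) : Set C → Set C → Prop :=
  Relation.ReflTransGen (stepAny Rs)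

/-- A state is saturated if no rule (from `Rs`) is applicable to it. -/
def saturated {C : Type} (Rs : Set (Rule C)) (A : Set C) : Prop :=
  ∀ R ∈ Rs, ¬ applicable R A

/-- A pinpointing state: a labelling of a finite set of consequences with
monotone Boolean formulas (`none` = unlabelled). -/
structure PState (C V : Type) where
  lab : C → Option (MBF V)
  finite : {c : C | lab c ≠ none}.Finite

/-- The label of `α` in `A`, which is `⊥` if `α` is unlabelled. -/
def PState.labOf {C V : Type} (A : PState C V) (α : C) : MBF V :=
  (A.lab α).getD .bot

/-- `fm(X, A)`: the conjunction of the labels of the elements of `X`. -/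
noncomputable def fm {C V : Type} (X : Finset C) (A : PState C V) : MBF V :=
  (X.toList.map A.labOf).foldr .and .top

/-- `R` is pinpointing applicable to `A` if `fm(pre R, A)` does not entail `fm(res R, A)`. -/
def pinApplicable {C V : Type} (R : Rule C) (A : PState C V) : Prop :=
  ¬ (fm R.pre A).entails (fm R.res A)

open Classical in
/-- Pinpointing rule application `A ⇀_R B`: each `α ∈ res R` is relabelled with
`φ_α ∨ fm(pre R, A)` (with `φ_α = ⊥` if `α` was unlabelled); all other labels unchanged. -/
def pinStep {C V : Type} (R : Rule C) (A B : PState C V) : Prop :=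
  pinApplicable R A ∧
  ∀ α : C, B.lab α =
    if α ∈ R.res then some ((A.labOf α).or (fm R.pre A)) else A.lab α

/-- One pinpointing step with some rule from `Rs`. -/
def pinStepAny {C V : Type} (Rs : Set (Rule C)) (A B : PState C V) : Prop :=
  ∃ R ∈ Rs, pinStep R A B

/-- Reflexive-transitive closure of pinpointing rule application: `A ⇀* B`. -/
def pinSteps {C V : Type} (Rs : Set (Rule C)) : PState C V → PState C V → Prop :=
  Relation.ReflTransGen (pinStepAny Rs)

/-- A pinpointing state is pinpointing saturated if no rule is pinpointing applicable. -/
def pinSaturated {C V : Type} (Rs : Set (Rule C)) (A : PState C V) : Prop :=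
  ∀ R ∈ Rs, ¬ pinApplicable R A

/-- The projection `A_V` of a pinpointing state under a valuation `v`. -/
def PState.proj {C V : Type} (A : PState C V) (v : Set V) : Set C :=
  {α | ∃ φ, A.lab α = some φ ∧ φ.sat v}

open Classical in
/-- `O^pin`: the initial pinpointing state labelling each axiom `α ∈ O` with the
propositional variable `labv α`. -/
noncomputable def initPState {C V : Type} (labv : C → V) (O : Finset C) : PState C V :=
  ⟨fun α => if α ∈ O then some (.var (labv α)) else none,
   Set.Finite.subset O.finite_toSet (by
     intro c hc
     simp only [Set.mem_setOf_eq, ne_eq, ite_eq_right_iff, not_forall] at hc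
     exact hc.choose)⟩

/-! A pinpointing step only ever weakens labels by a disjunct `fm(pre R, A)`, which a valuation
`v` satisfies exactly when `pre R ⊆ A_v`. So under `v` the step either changes nothing or adds
`res R` to `A_v` while `pre R ⊆ A_v`, which is a classical application of `R` or the identity. -/

lemma MBF.sat_foldr_and_iff {V : Type} (v : Set V) (l : List (MBF V)) :
    (l.foldr MBF.and MBF.top).sat v ↔ ∀ φ ∈ l, φ.sat v := by
  induction l with
  | nil => simp [MBF.sat]
  | cons φ l ih => simp [MBF.sat, ih]

namespace PState

variable {C V : Type}

lemma sat_labOf_iff (A : PState C V) (v : Set V) (α : C) :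
    (A.labOf α).sat v ↔ α ∈ A.proj v := by
  cases h : A.lab α <;> simp [labOf, proj, h, MBF.sat]

lemma sat_fm_iff (X : Finset C) (A : PState C V) (v : Set V) :
    (fm X A).sat v ↔ ↑X ⊆ A.proj v := by
  simp [fm, MBF.sat_foldr_and_iff, sat_labOf_iff, Set.subset_def]

end PState

lemma steps_union_res_of_pre_subset {C : Type} {Rs : Set (Rule C)} {R : Rule C} (hR : R ∈ Rs)
    {A : Set C} (hpre : ↑R.pre ⊆ A) : steps Rs A (A ∪ ↑R.res) := by
  by_cases hres : ↑R.res ⊆ A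
  · rw [Set.union_eq_self_of_subset_right hres]
    exact .refl
  · exact .single ⟨R, hR, ⟨hpre, hres⟩, rfl⟩

namespace pinStep

variable {C V : Type} {R : Rule C} {A B : PState C V}

open Classical in
lemma labOf_eq (h : pinStep R A B) (α : C) :
    B.labOf α = if α ∈ R.res then (A.labOf α).or (fm R.pre A) else A.labOf α := by
  rw [PState.labOf, h.2 α]
  split_ifs <;> rfl

lemma mem_proj_iff (h : pinStep R A B) (v : Set V) (α : C) :
    α ∈ B.proj v ↔ α ∈ A.proj v ∨ α ∈ R.res ∧ ↑R.pre ⊆ A.proj v := by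
  rw [← PState.sat_labOf_iff, h.labOf_eq]
  split_ifs with hα <;>
    simp [hα, MBF.sat, PState.sat_labOf_iff, PState.sat_fm_iff]

lemma steps_proj {Rs : Set (Rule C)} (hR : R ∈ Rs) (h : pinStep R A B) (v : Set V) :
    steps Rs (A.proj v) (B.proj v) := by
  by_cases hpre : ↑R.pre ⊆ A.proj v
  · have hB : B.proj v = A.proj v ∪ ↑R.res := by
      ext α
      simp [h.mem_proj_iff, hpre]
    rw [hB]
    exact steps_union_res_of_pre_subset hR hpre
  · have hB : B.proj v = A.proj v := by
      ext α
      simp [h.mem_proj_iff, hpre]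
    rw [hB]
    exact .refl

end pinStep

/-- If `A^pin ⇀* B^pin`, then for every valuation `v`,
`A_v →* B_v`. -/
theorem stmt1 {C V : Type} (Rs : Set (Rule C)) (Apin Bpin : PState C V)
    (h : pinSteps Rs Apin Bpin) (v : Set V) :
    steps Rs (Apin.proj v) (Bpin.proj v) :=
  Relation.ReflTransGen.lift' (fun A : PState C V => A.proj v)
    (fun _ _ ⟨_, hR, hstep⟩ => hstep.steps_proj hR v) _ _ h
end

section
/- (Theorem 1, made precise.) Let O be an ontology with n axioms and let f be a natural number. If every sequence of classical rule applications starting from O has length at most f, then every sequence of pinpointing rule applications starting from O^pin has length at most 2^n · (f + n). -/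
attribute [local instance] Classical.propDecidable

/-- The variables occurring in a formula. -/
def MBF.vars {V : Type} : MBF V → Set V
  | .var p => {p}
  | .top => ∅
  | .bot => ∅
  | .and φ ψ => φ.vars ∪ ψ.vars
  | .or φ ψ => φ.vars ∪ ψ.vars

lemma MBF.sat_inter {V : Type} {S v : Set V} : ∀ {φ : MBF V}, φ.vars ⊆ S →
    (φ.sat v ↔ φ.sat (v ∩ S))
  | .var p, h => by
      simp only [MBF.sat, Set.mem_inter_iff]
      exact ⟨fun hp => ⟨hp, h (by simp [MBF.vars])⟩, fun hp => hp.1⟩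
  | .top, _ => Iff.rfl
  | .bot, _ => Iff.rfl
  | .and φ ψ, h => by
      simp only [MBF.vars, Set.union_subset_iff] at h
      exact and_congr (MBF.sat_inter h.1) (MBF.sat_inter h.2)
  | .or φ ψ, h => by
      simp only [MBF.vars, Set.union_subset_iff] at h
      exact or_congr (MBF.sat_inter h.1) (MBF.sat_inter h.2)

lemma mem_proj {C V : Type} (A : PState C V) (v : Set V) (α : C) :
    α ∈ A.proj v ↔ (A.labOf α).sat v := by
  simp only [PState.proj, Set.mem_setOf_eq, PState.labOf]
  constructor
  · rintro ⟨φ, h1, h2⟩; rw [h1]; exact h2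
  · intro h
    cases hl : A.lab α with
    | none => rw [hl] at h; exact absurd h (by simp [Option.getD, MBF.sat])
    | some φ => exact ⟨φ, rfl, by rw [hl, Option.getD_some] at h; exact h⟩

lemma sat_foldr {V : Type} (v : Set V) : ∀ (l : List (MBF V)),
    ((l.foldr MBF.and MBF.top).sat v ↔ ∀ φ ∈ l, φ.sat v)
  | [] => by simp [MBF.sat]
  | φ :: l => by simp [MBF.sat, sat_foldr v l]

lemma sat_fm {C V : Type} (X : Finset C) (A : PState C V) (v : Set V) :
    (fm X A).sat v ↔ ∀ α ∈ X, (A.labOf α).sat v := by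
  unfold fm
  rw [sat_foldr]
  constructor
  · intro hl α hα
    exact hl _ (List.mem_map.mpr ⟨α, Finset.mem_toList.mpr hα, rfl⟩)
  · rintro hl φ hφ
    obtain ⟨α, hα, rfl⟩ := List.mem_map.mp hφ
    exact hl α (Finset.mem_toList.mp hα)

lemma vars_foldr {V : Type} (S : Set V) : ∀ (l : List (MBF V)), (∀ φ ∈ l, φ.vars ⊆ S) →
    (l.foldr MBF.and MBF.top).vars ⊆ S
  | [], _ => by simp [MBF.vars]
  | φ :: l, h => by
      simp only [List.foldr_cons, MBF.vars, Set.union_subset_iff]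
      exact ⟨h φ (by simp), vars_foldr S l (fun ψ hψ => h ψ (by simp [hψ]))⟩

lemma vars_fm {C V : Type} (X : Finset C) (A : PState C V) (S : Set V)
    (h : ∀ α, (A.labOf α).vars ⊆ S) : (fm X A).vars ⊆ S := by
  unfold fm
  exact vars_foldr S _ (by rintro φ hφ; obtain ⟨α, _, rfl⟩ := List.mem_map.mp hφ; exact h α)

lemma proj_pinStep {C V : Type} {R : Rule C} {A B : PState C V} (h : pinStep R A B) (v : Set V) :
    B.proj v = A.proj v ∨ (↑R.pre ⊆ A.proj v ∧ B.proj v = A.proj v ∪ ↑R.res) := by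
  obtain ⟨_, hlab⟩ := h
  have hlabOf : ∀ α, B.labOf α =
      if α ∈ R.res then (A.labOf α).or (fm R.pre A) else A.labOf α := by
    intro α
    unfold PState.labOf
    rw [hlab α]
    split <;> rfl
  by_cases hpre : (fm R.pre A).sat v
  · right
    refine ⟨fun α hα => (mem_proj A v α).2 ((sat_fm R.pre A v).1 hpre α hα), ?_⟩
    ext α
    rw [Set.mem_union, mem_proj, mem_proj, hlabOf α]
    by_cases hαres : α ∈ R.res
    · simp [hαres, MBF.sat, hpre]
    · simp [hαres]
  · left
    ext α
    rw [mem_proj, mem_proj, hlabOf α]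
    by_cases hαres : α ∈ R.res
    · simp [hαres, MBF.sat, hpre]
    · simp [hαres]

lemma count_lt (m : ℕ → ℕ) : ∀ (n : ℕ), (∀ i < n, m i ≤ m (i+1)) →
    ((Finset.range n).filter (fun i => m i < m (i+1))).card + m 0 ≤ m n
  | 0, _ => by simp
  | n+1, h => by
      have ih := count_lt m n (fun i hi => h i (by omega))
      rw [Finset.range_add_one, Finset.filter_insert]
      by_cases hn : m n < m (n+1)
      · rw [if_pos hn, Finset.card_insert_of_notMem (by simp)]
        omega
      · rw [if_neg hn]
        have := h n (by omega)
        omega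

lemma compress {C : Type} (Rs : Set (Rule C)) (q : ℕ → Set C) :
    ∀ (n : ℕ), (∀ i < n, q (i+1) = q i ∨ stepAny Rs (q i) (q (i+1))) →
    ∃ (m : ℕ) (g : ℕ → Set C), g 0 = q 0 ∧ g m = q n ∧
      (∀ j < m, stepAny Rs (g j) (g (j+1))) ∧
      ((Finset.range n).filter (fun i => q (i+1) ≠ q i)).card = m
  | 0, _ => ⟨0, fun _ => q 0, rfl, rfl, by omega, by simp⟩
  | n+1, hq => by
      obtain ⟨m, g, h0, hm, hstep, hcard⟩ := compress Rs q n (fun i hi => hq i (by omega))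
      rw [Finset.range_add_one, Finset.filter_insert]
      by_cases hne : q (n+1) ≠ q n
      · have hstepn : stepAny Rs (q n) (q (n+1)) := (hq n (by omega)).resolve_left hne
        refine ⟨m+1, fun j => if j ≤ m then g j else q (n+1),
          by show (if (0:ℕ) ≤ m then g 0 else q (n+1)) = q 0; rw [if_pos (by omega : (0:ℕ) ≤ m)]; exact h0,
          by show (if m+1 ≤ m then g (m+1) else q (n+1)) = q (n+1); rw [if_neg (by omega : ¬ (m+1 ≤ m))], ?_, ?_⟩
        · intro j hj
          by_cases h1 : j < m
          · show stepAny Rs (if j ≤ m then g j else q (n+1)) (if j+1 ≤ m then g (j+1) else q (n+1))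
            rw [if_pos (by omega : j ≤ m), if_pos (by omega : j+1 ≤ m)]
            exact hstep j h1
          · have hjm : j = m := by omega
            subst hjm
            show stepAny Rs (if j ≤ j then g j else q (n+1)) (if j+1 ≤ j then g (j+1) else q (n+1))
            rw [if_pos le_rfl, if_neg (by omega : ¬ (j+1 ≤ j)), hm]
            exact hstepn
        · rw [if_pos hne, Finset.card_insert_of_notMem (by simp), hcard]
      · push_neg at hne
        rw [if_neg (by simpa using hne)]
        exact ⟨m, g, h0, by rw [hm, hne], hstep, hcard⟩
lemma lazyBound {C : Type} (Rs : Set (Rule C)) (O : Finset C) (f : ℕ)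
    (h : ∀ (n : ℕ) (g : ℕ → Set C), g 0 = ↑O →
          (∀ i < n, stepAny Rs (g i) (g (i + 1))) → n ≤ f)
    (p : ℕ → Set C) (hp0 : p 0 ⊆ ↑O) (n : ℕ)
    (hlazy : ∀ i < n, p (i+1) = p i ∨ ∃ R ∈ Rs, ↑R.pre ⊆ p i ∧ p (i+1) = p i ∪ ↑R.res) :
    ((Finset.range n).filter (fun i => p (i+1) ≠ p i)).card ≤ f + O.card := by
  set q : ℕ → Set C := fun i => p i ∪ ↑O with hq
  have hmono : ∀ i < n, p i ⊆ p (i+1) := by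
    intro i hi
    rcases hlazy i hi with he | ⟨R, _, _, he⟩
    · rw [he]
    · rw [he]; exact Set.subset_union_left
  have hqlazy : ∀ i < n, q (i+1) = q i ∨ stepAny Rs (q i) (q (i+1)) := by
    intro i hi
    rcases hlazy i hi with he | ⟨R, hR, hpre, he⟩
    · left; simp only [hq, he]
    · by_cases hres : ↑R.res ⊆ q i
      · left
        simp only [hq, he]
        rw [Set.union_right_comm]
        exact Set.union_eq_left.mpr hres
      · right
        refine ⟨R, hR, ⟨hpre.trans Set.subset_union_left, hres⟩, ?_⟩
        simp only [hq, he]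
        rw [Set.union_right_comm]
  set m : ℕ → ℕ := fun i => (O.filter (· ∈ p i)).card with hmdef
  have hmmono : ∀ i < n, m i ≤ m (i+1) := by
    intro i hi
    apply Finset.card_le_card
    intro x hx
    rw [Finset.mem_filter] at hx ⊢
    exact ⟨hx.1, hmono i hi hx.2⟩
  have hsub : (Finset.range n).filter (fun i => p (i+1) ≠ p i) ⊆
      ((Finset.range n).filter (fun i => q (i+1) ≠ q i)) ∪
      ((Finset.range n).filter (fun i => m i < m (i+1))) := by
    intro i hi
    simp only [Finset.mem_filter, Finset.mem_range, Finset.mem_union] at hi ⊢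
    obtain ⟨hin, hne⟩ := hi
    by_cases hqne : q (i+1) ≠ q i
    · exact Or.inl ⟨hin, hqne⟩
    · push_neg at hqne
      right
      refine ⟨hin, ?_⟩
      rcases hlazy i hin with he | ⟨R, hR, hpre, he⟩
      · exact absurd he hne
      · have hnres : ¬ (↑R.res ⊆ p i) := by
          intro hc
          exact hne (by rw [he]; exact Set.union_eq_left.mpr hc)
        obtain ⟨α, hαres, hαp⟩ := Set.not_subset.mp hnres
        have hαq : α ∈ q i := by
          rw [← hqne]
          simp only [hq, he]
          exact Or.inl (Or.inr hαres)
        have hαO : α ∈ O := by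
          rcases hαq with h1 | h1
          · exact absurd h1 hαp
          · exact h1
        apply Finset.card_lt_card
        refine ⟨?_, ?_⟩
        · intro x hx
          rw [Finset.mem_filter] at hx ⊢
          exact ⟨hx.1, hmono i hin hx.2⟩
        intro hc
        have : α ∈ O.filter (· ∈ p i) := hc (Finset.mem_filter.mpr ⟨hαO, by rw [he]; exact Or.inr hαres⟩)
        exact hαp (Finset.mem_filter.mp this).2
  have hD1 : ((Finset.range n).filter (fun i => q (i+1) ≠ q i)).card ≤ f := by
    obtain ⟨k, g, hg0, _, hgstep, hcard⟩ := compress Rs q n hqlazy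
    rw [hcard]
    exact h k g (by rw [hg0]; exact Set.union_eq_right.mpr hp0) hgstep
  have hD2 : ((Finset.range n).filter (fun i => m i < m (i+1))).card ≤ O.card := by
    have h1 := count_lt m n hmmono
    have h2 : m n ≤ O.card := Finset.card_le_card (Finset.filter_subset _ _)
    omega
  calc ((Finset.range n).filter (fun i => p (i+1) ≠ p i)).card
      ≤ (((Finset.range n).filter (fun i => q (i+1) ≠ q i)) ∪
         ((Finset.range n).filter (fun i => m i < m (i+1)))).card := Finset.card_le_card hsub
    _ ≤ ((Finset.range n).filter (fun i => q (i+1) ≠ q i)).card +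
        ((Finset.range n).filter (fun i => m i < m (i+1))).card := Finset.card_union_le _ _
    _ ≤ f + O.card := Nat.add_le_add hD1 hD2
/-- Theorem 1, made precise: if every sequence of classical rule applications
starting from `O` has length at most `f`, then every sequence of pinpointing rule
applications starting from `O^pin` has length at most `2 ^ |O| * (f + |O|)`. -/
theorem stmt5 {C V : Type} (Rs : Set (Rule C)) (labv : C → V)
    (hinj : Function.Injective labv) (O : Finset C) (f : ℕ)
    (h : ∀ (n : ℕ) (g : ℕ → Set C), g 0 = ↑O →
          (∀ i < n, stepAny Rs (g i) (g (i + 1))) → n ≤ f) :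
    ∀ (n : ℕ) (g : ℕ → PState C V), g 0 = initPState labv O →
      (∀ i < n, pinStepAny Rs (g i) (g (i + 1))) →
      n ≤ 2 ^ O.card * (f + O.card) := by
  classical
  intro n g hg0 hgstep
  set S : Finset V := O.image labv with hS
  have hinv : ∀ i, i ≤ n → ∀ α, ((g i).labOf α).vars ⊆ ↑S := by
    intro i
    induction i with
    | zero =>
      intro _ α
      rw [hg0]
      simp only [PState.labOf, initPState]
      by_cases hα : α ∈ O
      · rw [if_pos hα, Option.getD_some]
        intro x hx
        simp only [MBF.vars, Set.mem_singleton_iff] at hx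
        subst hx
        exact Finset.mem_coe.mpr (Finset.mem_image_of_mem labv hα)
      · rw [if_neg hα]
        simp [MBF.vars, Option.getD]
    | succ i ih =>
      intro hi α
      obtain ⟨R, hR, _, hlab⟩ := hgstep i (by omega)
      have ihα := ih (by omega)
      simp only [PState.labOf]
      rw [hlab α]
      by_cases hαres : α ∈ R.res
      · rw [if_pos hαres, Option.getD_some]
        simp only [MBF.vars, Set.union_subset_iff]
        exact ⟨ihα α, vars_fm R.pre (g i) ↑S ihα⟩
      · rw [if_neg hαres]
        exact ihα α
  have claim1 : ∀ i < n, ∃ s ∈ S.powerset, (g (i+1)).proj ↑s ≠ (g i).proj ↑s := by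
    intro i hi
    obtain ⟨R, hR, happ, hlab⟩ := hgstep i hi
    rw [pinApplicable, MBF.entails] at happ
    push_neg at happ
    obtain ⟨v, hv1, hv2⟩ := happ
    have hpre_vars : (fm R.pre (g i)).vars ⊆ ↑S := vars_fm _ _ _ (hinv i (by omega))
    have hres_vars : (fm R.res (g i)).vars ⊆ ↑S := vars_fm _ _ _ (hinv i (by omega))
    have hv1' : (fm R.pre (g i)).sat (v ∩ ↑S) := (MBF.sat_inter hpre_vars).1 hv1
    have hv2' : ¬ (fm R.res (g i)).sat (v ∩ ↑S) := fun hc => hv2 ((MBF.sat_inter hres_vars).2 hc)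
    rw [sat_fm] at hv2'
    push_neg at hv2'
    obtain ⟨α, hαres, hαsat⟩ := hv2'
    refine ⟨S.filter (· ∈ v), Finset.mem_powerset.mpr (Finset.filter_subset _ _), ?_⟩
    have hcoe : (↑(S.filter (· ∈ v)) : Set V) = v ∩ ↑S := by
      ext x
      simp only [Finset.coe_filter, Set.mem_setOf_eq, Set.mem_inter_iff, Finset.mem_coe]
      exact and_comm
    rw [hcoe]
    intro hcontra
    have hα_new : α ∈ (g (i+1)).proj (v ∩ ↑S) := by
      rw [mem_proj]
      have hgα : (g (i+1)).labOf α = ((g i).labOf α).or (fm R.pre (g i)) := by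
        simp only [PState.labOf]
        rw [hlab α, if_pos hαres, Option.getD_some]
        rfl
      rw [hgα]
      exact Or.inr hv1'
    rw [hcontra, mem_proj] at hα_new
    exact hαsat hα_new
  have hbound : ∀ s ∈ S.powerset,
      ((Finset.range n).filter (fun i => (g (i+1)).proj ↑s ≠ (g i).proj ↑s)).card
        ≤ f + O.card := by
    intro s _
    refine lazyBound Rs O f h (fun i => (g i).proj ↑s) ?_ n ?_
    · show (g 0).proj ↑s ⊆ ↑O
      rw [hg0]
      intro α hα
      obtain ⟨φ, hφ, _⟩ := hα
      simp only [initPState] at hφ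
      by_cases hαO : α ∈ O
      · exact hαO
      · rw [if_neg hαO] at hφ
        exact absurd hφ (by simp)
    · intro i hi
      obtain ⟨R, hR, hstep⟩ := hgstep i hi
      rcases proj_pinStep hstep ↑s with he | ⟨h1, h2⟩
      · exact Or.inl he
      · exact Or.inr ⟨R, hR, h1, h2⟩
  have hsubB : Finset.range n ⊆ S.powerset.biUnion
      (fun s => (Finset.range n).filter (fun i => (g (i+1)).proj ↑s ≠ (g i).proj ↑s)) := by
    intro i hi
    rw [Finset.mem_biUnion]
    obtain ⟨s, hs, hne⟩ := claim1 i (Finset.mem_range.mp hi)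
    exact ⟨s, hs, Finset.mem_filter.mpr ⟨hi, hne⟩⟩
  have hcards : S.card = O.card := Finset.card_image_of_injective O hinj
  calc n = (Finset.range n).card := (Finset.card_range n).symm
    _ ≤ (S.powerset.biUnion
          (fun s => (Finset.range n).filter
            (fun i => (g (i+1)).proj ↑s ≠ (g i).proj ↑s))).card := Finset.card_le_card hsubB
    _ ≤ ∑ s ∈ S.powerset,
          ((Finset.range n).filter
            (fun i => (g (i+1)).proj ↑s ≠ (g i).proj ↑s)).card := Finset.card_biUnion_le
    _ ≤ S.powerset.card * (f + O.card) := by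
          have := Finset.sum_le_card_nsmul S.powerset _ (f + O.card) hbound
          simpa using this
    _ = 2 ^ O.card * (f + O.card) := by rw [Finset.card_powerset, hcards]
end
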